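/- arXiv:2405.12973 — 3 statements merged into one kernel-verified Lean document; each statement's English description precedes it below -/
import Mathlib

section
/- Let K ⊆ ℝ^n be a self-dual proper convex cone. A quadratic form q(x) = xᵀQx with real symmetric matrix Q is K-Lorentzian if and only if Q has exactly one positive eigenvalue (counted with multiplicity) and Q is K-nonnegative (i.e. Q(K) ⊆ K). -/
open Matrix Filter Topology

/-- The number of positive eigenvalues (with multiplicity) of a real symmetric matrix. -/
noncomputable def posEigCount {n : ℕ} (Q : Matrix (Fin n) (Fin n) ℝ) : ℕ :=
  @dite _ Q.IsHermitian (Classical.dec _)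
    (fun h => (Finset.univ.filter fun i => 0 < h.eigenvalues i).card)
    (fun _ => 0)

/-- A proper convex cone: a closed convex cone that is pointed and solid. -/
def IsProperCone {n : ℕ} (K : Set (Fin n → ℝ)) : Prop :=
  Convex ℝ K ∧ (∀ c : ℝ, 0 ≤ c → ∀ x ∈ K, c • x ∈ K) ∧
    IsClosed K ∧ K ∩ (-K) = {0} ∧ (interior K).Nonempty

/-- The dual cone of `K` with respect to the standard inner product. -/
def dualConeSet {n : ℕ} (K : Set (Fin n → ℝ)) : Set (Fin n → ℝ) :=
  {y | ∀ x ∈ K, 0 ≤ y ⬝ᵥ x}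

/-- The quadratic form with symmetric matrix `Q` is `K`-Lorentzian: `Q` has exactly one
positive eigenvalue and `yᵀQx > 0` for all `x, y` in the interior of `K`. -/
def IsLorentzianMatrix {n : ℕ} (K : Set (Fin n → ℝ)) (Q : Matrix (Fin n) (Fin n) ℝ) : Prop :=
  posEigCount Q = 1 ∧ ∀ x ∈ interior K, ∀ y ∈ interior K, 0 < y ⬝ᵥ (Q *ᵥ x)

/-- A nonzero `v ∈ K` spans an extreme ray of `K`. -/
def SpansExtremeRay {n : ℕ} (K : Set (Fin n → ℝ)) (v : Fin n → ℝ) : Prop :=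
  v ∈ K ∧ v ≠ 0 ∧ ∀ x ∈ K, ∀ y ∈ K, v = x + y →
    (∃ c : ℝ, 0 ≤ c ∧ x = c • v) ∧ (∃ c : ℝ, 0 ≤ c ∧ y = c • v)

/-! Both directions rest on self-duality. If `yᵀQx > 0` on the interior, then by continuity and
density of the interior `yᵀQx ≥ 0` on `K`, so `Qx ∈ K* = K`. Conversely, for `x` interior `Qx` is a
nonzero element of `K = K*` (were `Qx = 0`, moving `x` in both directions `±u` inside `K` and
pointedness would force `Q = 0`), and a nonzero element of `K*` is strictly positive on the
interior of `K`. -/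

lemma eventually_add_smul_mem_of_mem_interior {E : Type*} [AddCommGroup E] [Module ℝ E]
    [TopologicalSpace E] [ContinuousAdd E] [ContinuousSMul ℝ E] {K : Set E} {x : E}
    (hx : x ∈ interior K) (u : E) : ∀ᶠ c in 𝓝 (0 : ℝ), x + c • u ∈ K := by
  have : Tendsto (fun c : ℝ => x + c • u) (𝓝 0) (𝓝 x) := by
    simpa using tendsto_const_nhds.add ((tendsto_id (x := 𝓝 (0 : ℝ))).smul_const u)
  exact this (mem_interior_iff_mem_nhds.mp hx)

lemma LinearMap.eq_zero_of_mapsTo_of_apply_mem_interior_eq_zero {E F : Type*}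
    [AddCommGroup E] [Module ℝ E] [TopologicalSpace E] [ContinuousAdd E] [ContinuousSMul ℝ E]
    [AddCommGroup F] [Module ℝ F] {K : Set E} {L : Set F} (hL : L ∩ -L = {0})
    (f : E →ₗ[ℝ] F) (hf : Set.MapsTo f K L) {x : E} (hx : x ∈ interior K) (hfx : f x = 0) :
    f = 0 := by
  ext u
  obtain ⟨c, ⟨hplus, hminus⟩, hc⟩ :=
    (((eventually_add_smul_mem_of_mem_interior hx u).and
      (eventually_add_smul_mem_of_mem_interior hx (-u))).filter_mono nhdsWithin_le_nhds |>.and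
      (self_mem_nhdsWithin : ∀ᶠ c in 𝓝[>] (0 : ℝ), 0 < c)).exists
  have hfu : c • f u ∈ L ∩ -L := by
    refine ⟨?_, ?_⟩
    · simpa [hfx] using hf hplus
    · simpa [hfx] using hf hminus
  rw [hL, Set.mem_singleton_iff, smul_eq_zero] at hfu
  simpa [hc.ne'] using hfu

lemma dotProduct_pos_of_mem_interior_of_mem_dualConeSet {n : ℕ} {K : Set (Fin n → ℝ)}
    {y v : Fin n → ℝ} (hy : y ∈ interior K) (hv : v ∈ dualConeSet K) (hv0 : v ≠ 0) :
    0 < v ⬝ᵥ y := by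
  obtain ⟨c, hmem, hc⟩ :=
    ((eventually_add_smul_mem_of_mem_interior hy v).filter_mono nhdsWithin_le_nhds |>.and
      (self_mem_nhdsWithin : ∀ᶠ c in 𝓝[<] (0 : ℝ), c < 0)).exists
  have hvv : 0 < v ⬝ᵥ v := dotProduct_self_star_pos_iff.mpr hv0
  have := hv _ hmem
  rw [dotProduct_add, dotProduct_smul, smul_eq_mul] at this
  nlinarith

lemma dotProduct_mulVec_nonneg_of_pos_on_interior {n : ℕ} {K : Set (Fin n → ℝ)}
    (hconv : Convex ℝ K) (hint : (interior K).Nonempty) {Q : Matrix (Fin n) (Fin n) ℝ}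
    (hpos : ∀ x ∈ interior K, ∀ y ∈ interior K, 0 < y ⬝ᵥ (Q *ᵥ x)) :
    ∀ x ∈ K, ∀ y ∈ K, 0 ≤ y ⬝ᵥ (Q *ᵥ x) := by
  have hclosed : IsClosed {p : (Fin n → ℝ) × (Fin n → ℝ) | 0 ≤ p.2 ⬝ᵥ (Q *ᵥ p.1)} :=
    isClosed_le continuous_const
      (continuous_snd.dotProduct (continuous_const.matrix_mulVec continuous_fst))
  have hdense : K ⊆ closure (interior K) := by
    rw [hconv.closure_interior_eq_closure_of_nonempty_interior hint]
    exact subset_closure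
  intro x hx y hy
  have hsub := closure_minimal (s := interior K ×ˢ interior K)
    (fun p hp => (hpos p.1 hp.1 p.2 hp.2).le) hclosed
  rw [closure_prod_eq] at hsub
  exact hsub (a := (x, y)) ⟨hdense hx, hdense hy⟩

lemma ne_zero_of_posEigCount_pos {n : ℕ} {Q : Matrix (Fin n) (Fin n) ℝ}
    (h : 0 < posEigCount Q) : Q ≠ 0 := by
  rintro rfl
  unfold posEigCount at h
  split_ifs at h with hQ
  · obtain ⟨i, hi⟩ := Finset.card_pos.mp h
    have hv := hQ.mulVec_eigenvectorBasis i
    rw [zero_mulVec, eq_comm, smul_eq_zero] at hv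
    rcases hv with ht | hv
    · exact (Finset.mem_filter.mp hi).2.ne' ht
    · exact hQ.eigenvectorBasis.orthonormal.ne_zero i (by ext j; simpa using congrFun hv j)
  · exact absurd h (lt_irrefl 0)

theorem stmt4_general {n : ℕ} (K : Set (Fin n → ℝ)) (hK : IsProperCone K) (hsd : K = dualConeSet K)
    (Q : Matrix (Fin n) (Fin n) ℝ) :
    IsLorentzianMatrix K Q ↔ (posEigCount Q = 1 ∧ ∀ x ∈ K, Q *ᵥ x ∈ K) := by
  obtain ⟨hconv, -, -, hpointed, hint⟩ := hK
  constructor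
  · rintro ⟨hcount, hpos⟩
    refine ⟨hcount, fun x hx => ?_⟩
    rw [hsd]
    intro z hz
    rw [dotProduct_comm]
    exact dotProduct_mulVec_nonneg_of_pos_on_interior hconv hint hpos x hx z hz
  · rintro ⟨hcount, hmaps⟩
    refine ⟨hcount, fun x hx y hy => ?_⟩
    have hQx : Q *ᵥ x ≠ 0 := fun hQx => ne_zero_of_posEigCount_pos (hcount ▸ one_pos) <|
      Matrix.toLin'.map_eq_zero_iff.mp
        ((toLin' Q).eq_zero_of_mapsTo_of_apply_mem_interior_eq_zero hpointed hmaps hx hQx)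
    rw [dotProduct_comm]
    exact dotProduct_pos_of_mem_interior_of_mem_dualConeSet hy
      (hsd ▸ hmaps x (interior_subset hx)) hQx

/-- Let `K ⊆ ℝⁿ` be a self-dual proper convex cone. A quadratic form
`q(x) = xᵀQx` with real symmetric matrix `Q` is `K`-Lorentzian if and only if `Q` has
exactly one positive eigenvalue and `Q` is `K`-nonnegative, i.e. `Q(K) ⊆ K`. -/
theorem stmt4 {n : ℕ} (K : Set (Fin n → ℝ)) (hK : IsProperCone K) (hsd : K = dualConeSet K)
    (Q : Matrix (Fin n) (Fin n) ℝ) (hsymm : Q.IsHermitian) :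
    IsLorentzianMatrix K Q ↔ (posEigCount Q = 1 ∧ ∀ x ∈ K, Q *ᵥ x ∈ K) :=
  stmt4_general K hK hsd Q
end

section
/- Let K ⊆ ℝ^n be a self-dual proper convex cone and let q(x) = xᵀQx be a K-Lorentzian quadratic form whose real symmetric matrix Q is nonsingular. Then no eigenvector of Q lies on the boundary of K; in particular, an eigenvector of Q corresponding to its unique positive eigenvalue lies (after possibly replacing it by its negative) in the interior of K. -/
open Matrix

/-!
If an eigenvector `v` of `Q` lay on the boundary of `K`, then `q ≥ 0` on `K` and the
nonsingularity of `Q` make its eigenvalue positive, so `q(v) > 0`. A supporting hyperplane of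
`K` at `v` is, by self-duality, `w⊥` for some nonzero `w ∈ K`; then `wᵀQv = μ ⟨w, v⟩ = 0` and
`q(w) ≥ 0`. But a nonsingular form with exactly one positive eigenvalue is negative definite on
the `Q`-orthogonal complement of any `v` with `q(v) > 0`, which forces `w = 0`.

For an eigenvector `v` with positive eigenvalue the same dichotomy shows that `x ↦ ⟨x, v⟩` has no
zero on the connected set `int K`, so one of `±v` lies in `K* = K` and hence, by the first part,
in `int K`.
-/

namespace Matrix.IsHermitian

variable {n : Type*} [Fintype n] {Q : Matrix n n ℝ}

theorem dotProduct_mulVec_comm (hQ : Q.IsHermitian) (v w : n → ℝ) :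
    v ⬝ᵥ Q *ᵥ w = w ⬝ᵥ Q *ᵥ v := by
  rw [dotProduct_mulVec, ← mulVec_transpose, dotProduct_comm]
  have : Qᵀ = Q := by simpa using hQ.eq
  rw [this]

theorem eq_zero_of_dotProduct_mulVec_eq_zero_of_nonneg (hQ : Q.IsHermitian)
    {e : n → ℝ} (he : ∀ u, e ⬝ᵥ u = 0 → u ≠ 0 → u ⬝ᵥ Q *ᵥ u < 0) {v w : n → ℝ}
    (hv : 0 < v ⬝ᵥ Q *ᵥ v) (hwv : w ⬝ᵥ Q *ᵥ v = 0) (hw : 0 ≤ w ⬝ᵥ Q *ᵥ w) : w = 0 := by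
  have hev : e ⬝ᵥ v ≠ 0 := fun h => (he v h (by rintro rfl; simp at hv)).not_gt hv
  set t := (e ⬝ᵥ w) / (e ⬝ᵥ v)
  have hu : e ⬝ᵥ (w - t • v) = 0 := by
    rw [dotProduct_sub, dotProduct_smul, smul_eq_mul, div_mul_cancel₀ _ hev, sub_self]
  have hq : (w - t • v) ⬝ᵥ Q *ᵥ (w - t • v) = w ⬝ᵥ Q *ᵥ w + t ^ 2 * (v ⬝ᵥ Q *ᵥ v) := by
    simp only [mulVec_sub, mulVec_smul, dotProduct_sub, sub_dotProduct, dotProduct_smul,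
      smul_dotProduct, smul_eq_mul, hQ.dotProduct_mulVec_comm v w, hwv]
    ring
  have hwtv : w = t • v := by
    by_contra h
    have := he _ hu (sub_ne_zero.2 h)
    nlinarith [sq_nonneg t]
  rw [hwtv, smul_dotProduct, smul_eq_mul] at hwv
  rw [hwtv, (mul_eq_zero.1 hwv).resolve_right hv.ne', zero_smul]

variable [DecidableEq n]

theorem dotProduct_mulVec_self (hQ : Q.IsHermitian) (u : n → ℝ) :
    u ⬝ᵥ Q *ᵥ u = ∑ i, hQ.eigenvalues i * (⇑(hQ.eigenvectorBasis i) ⬝ᵥ u) ^ 2 := by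
  have h := hQ.eigenvectorBasis.sum_inner_mul_inner (WithLp.toLp 2 u) (WithLp.toLp 2 (Q *ᵥ u))
  simp only [EuclideanSpace.inner_eq_star_dotProduct, star_trivial] at h
  rw [dotProduct_comm, ← h]
  refine Finset.sum_congr rfl fun i _ => ?_
  rw [dotProduct_comm (Q *ᵥ u), hQ.dotProduct_mulVec_comm, hQ.mulVec_eigenvectorBasis,
    dotProduct_smul, smul_eq_mul, dotProduct_comm u]
  ring

theorem eq_zero_of_forall_eigenvectorBasis_dotProduct (hQ : Q.IsHermitian)
    {u : n → ℝ} (h : ∀ i, ⇑(hQ.eigenvectorBasis i) ⬝ᵥ u = 0) : u = 0 := by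
  have : hQ.eigenvectorBasis.repr (WithLp.toLp 2 u) = 0 := by
    ext i
    simpa [OrthonormalBasis.repr_apply_apply, EuclideanSpace.inner_eq_star_dotProduct,
      dotProduct_comm] using h i
  simpa using this

theorem eigenvalues_ne_zero (hQ : Q.IsHermitian) (hdet : Q.det ≠ 0) (i : n) :
    hQ.eigenvalues i ≠ 0 := by
  intro h
  apply hdet
  rw [hQ.det_eq_prod_eigenvalues]
  exact Finset.prod_eq_zero (Finset.mem_univ i) (by simp [h])

end Matrix.IsHermitian

theorem exists_dotProduct_mulVec_self_neg_of_posEigCount_eq_one {m : ℕ}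
    {Q : Matrix (Fin m) (Fin m) ℝ} (hQ : Q.IsHermitian) (hdet : Q.det ≠ 0)
    (h1 : posEigCount Q = 1) :
    ∃ e : Fin m → ℝ, ∀ u, e ⬝ᵥ u = 0 → u ≠ 0 → u ⬝ᵥ Q *ᵥ u < 0 := by
  rw [posEigCount, dif_pos hQ, Finset.card_eq_one] at h1
  obtain ⟨i₀, hi₀⟩ := h1
  have hneg : ∀ i ≠ i₀, hQ.eigenvalues i < 0 := fun i hi =>
    (hQ.eigenvalues_ne_zero hdet i).lt_of_le <| not_lt.1 fun h =>
      hi (Finset.mem_singleton.1 (hi₀ ▸ Finset.mem_filter.2 ⟨Finset.mem_univ i, h⟩))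
  refine ⟨hQ.eigenvectorBasis i₀, fun u hu hu0 => ?_⟩
  obtain ⟨j, hj⟩ : ∃ j, ⇑(hQ.eigenvectorBasis j) ⬝ᵥ u ≠ 0 := by
    by_contra! h
    exact hu0 (hQ.eq_zero_of_forall_eigenvectorBasis_dotProduct h)
  have hji₀ : j ≠ i₀ := by rintro rfl; exact hj hu
  rw [hQ.dotProduct_mulVec_self]
  refine (Finset.sum_lt_sum (fun i _ => ?_) ⟨j, Finset.mem_univ j, ?_⟩).trans_eq
    (Finset.sum_const_zero (s := Finset.univ))
  · rcases eq_or_ne i i₀ with rfl | hi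
    · simp [hu]
    · exact mul_nonpos_of_nonpos_of_nonneg (hneg i hi).le (sq_nonneg _)
  · exact mul_neg_of_neg_of_pos (hneg j hji₀) (by positivity)

open Set

section Cone

variable {E : Type*} [AddCommGroup E] [Module ℝ E] [TopologicalSpace E] [IsTopologicalAddGroup E]
  [ContinuousSMul ℝ E] {K : Set E}

theorem Convex.nonneg_of_mem_of_forall_interior_nonneg (hK : Convex ℝ K)
    (hint : (interior K).Nonempty) {f : E → ℝ} (hf : Continuous f)
    (h : ∀ x ∈ interior K, 0 ≤ f x) {x : E} (hx : x ∈ K) : 0 ≤ f x := by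
  have hx' : x ∈ closure (interior K) := by
    rw [hK.closure_interior_eq_closure_of_nonempty_interior hint]
    exact subset_closure hx
  exact closure_minimal h (isClosed_le continuous_const hf) hx'

theorem zero_notMem_interior_of_inter_neg_eq [Nontrivial E] (hpt : K ∩ -K = {0}) :
    (0 : E) ∉ interior K := by
  intro h
  refine not_isOpen_singleton (0 : E) ?_
  have hsub : interior K ∩ -interior K ⊆ K ∩ -K :=
    inter_subset_inter interior_subset (neg_subset_neg.2 interior_subset)
  rw [hpt] at hsub
  have h0 : interior K ∩ -interior K = {0} :=
    hsub.antisymm (singleton_subset_iff.2 ⟨h, by simpa using h⟩)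
  exact h0 ▸ isOpen_interior.inter isOpen_interior.neg

end Cone

theorem IsPreconnected.pos_of_forall_ne_zero {X : Type*} [TopologicalSpace X] {s : Set X}
    (hs : IsPreconnected s) {f : X → ℝ} (hf : ContinuousOn f s) (hne : ∀ x ∈ s, f x ≠ 0)
    {a : X} (ha : a ∈ s) (hpos : 0 < f a) {x : X} (hx : x ∈ s) : 0 < f x := by
  by_contra! h
  obtain ⟨y, hy, hy0⟩ := hs.intermediate_value hx ha hf ⟨h, hpos.le⟩
  exact hne y hy hy0

theorem StrongDual.dotProduct_eq {n : ℕ} (f : StrongDual ℝ (Fin n → ℝ)) (x : Fin n → ℝ) :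
    (fun i => f (Pi.single i 1)) ⬝ᵥ x = f x := by
  conv_rhs => rw [← Finset.univ_sum_single x]
  simp only [map_sum, dotProduct]
  refine Finset.sum_congr rfl fun i _ => ?_
  rw [mul_comm, ← smul_eq_mul, ← map_smul, ← Pi.single_smul', smul_eq_mul, mul_one]

theorem exists_mem_dualConeSet_ne_zero_dotProduct_eq_zero {n : ℕ} {K : Set (Fin n → ℝ)}
    (hconv : Convex ℝ K) (hcone : ∀ c : ℝ, 0 ≤ c → ∀ x ∈ K, c • x ∈ K)
    (hint : (interior K).Nonempty) {v : Fin n → ℝ} (hvK : v ∈ K) (hv : v ∉ interior K) :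
    ∃ w ∈ dualConeSet K, w ≠ 0 ∧ w ⬝ᵥ v = 0 := by
  obtain ⟨f, hf⟩ := geometric_hahn_banach_open_point hconv.interior isOpen_interior hv
  have hle : ∀ x ∈ K, f x ≤ f v := fun x hx => sub_nonneg.1 <|
    hconv.nonneg_of_mem_of_forall_interior_nonneg hint (continuous_const.sub f.continuous)
      (fun a ha => (sub_pos.2 (hf a ha)).le) hx
  have hfK : ∀ x ∈ K, f x ≤ 0 := by
    intro x hx
    by_contra! hfx
    have := hle _ (hcone ((|f v| + 1) / f x) (by positivity) x hx)
    rw [map_smul, smul_eq_mul, div_mul_cancel₀ _ hfx.ne'] at this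
    linarith [le_abs_self (f v)]
  have hfv : f v = 0 :=
    le_antisymm (hfK v hvK) (by simpa using hle 0 (by simpa using hcone 0 le_rfl v hvK))
  refine ⟨-fun i => f (Pi.single i 1), fun x hx => ?_, fun h => ?_, ?_⟩
  · rw [neg_dotProduct, f.dotProduct_eq]
    linarith [hfK x hx]
  · obtain ⟨a, ha⟩ := hint
    have := f.dotProduct_eq a
    rw [neg_eq_zero.1 h, zero_dotProduct] at this
    linarith [hf a ha]
  · rw [neg_dotProduct, f.dotProduct_eq, hfv, neg_zero]

section Lorentzian

variable {n : ℕ} {K : Set (Fin n → ℝ)} {Q : Matrix (Fin n) (Fin n) ℝ}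

theorem IsLorentzianMatrix.dotProduct_mulVec_nonneg (hL : IsLorentzianMatrix K Q)
    (hconv : Convex ℝ K) (hint : (interior K).Nonempty) {x y : Fin n → ℝ} (hx : x ∈ K)
    (hy : y ∈ K) : 0 ≤ y ⬝ᵥ Q *ᵥ x := by
  have hx' : ∀ y ∈ interior K, 0 ≤ y ⬝ᵥ Q *ᵥ x := fun y hy =>
    hconv.nonneg_of_mem_of_forall_interior_nonneg hint (f := fun x => y ⬝ᵥ Q *ᵥ x)
      (by fun_prop) (fun x hx => (hL.2 x hx y hy).le) hx
  exact hconv.nonneg_of_mem_of_forall_interior_nonneg hint (f := fun y => y ⬝ᵥ Q *ᵥ x)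
    (by fun_prop) hx' hy

theorem IsLorentzianMatrix.eigenvector_notMem_frontier (hL : IsLorentzianMatrix K Q)
    (hK : IsProperCone K) (hsd : K = dualConeSet K) (hQ : Q.IsHermitian) (hdet : Q.det ≠ 0)
    {v : Fin n → ℝ} {μ : ℝ} (hv : v ≠ 0) (heig : Q *ᵥ v = μ • v) : v ∉ frontier K := by
  obtain ⟨hconv, hcone, hcl, -, hint⟩ := hK
  intro hvF
  have hvK : v ∈ K := hcl.frontier_subset hvF
  have hμ : μ ≠ 0 := by
    rintro rfl
    rw [zero_smul] at heig
    exact hv (eq_zero_of_mulVec_eq_zero hdet heig)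
  have hqv : 0 < v ⬝ᵥ Q *ᵥ v := by
    refine (hL.dotProduct_mulVec_nonneg hconv hint hvK hvK).lt_of_ne' ?_
    rw [heig, dotProduct_smul, smul_eq_mul]
    exact mul_ne_zero hμ (mt dotProduct_self_eq_zero.1 hv)
  obtain ⟨e, he⟩ := exists_dotProduct_mulVec_self_neg_of_posEigCount_eq_one hQ hdet hL.1
  obtain ⟨w, hwK, hw0, hwv⟩ :=
    exists_mem_dualConeSet_ne_zero_dotProduct_eq_zero hconv hcone hint hvK hvF.2
  rw [← hsd] at hwK
  refine hw0 (hQ.eq_zero_of_dotProduct_mulVec_eq_zero_of_nonneg he hqv ?_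
    (hL.dotProduct_mulVec_nonneg hconv hint hwK hwK))
  rw [heig, dotProduct_smul, hwv, smul_zero]

theorem IsLorentzianMatrix.dotProduct_eigenvector_ne_zero (hL : IsLorentzianMatrix K Q)
    (hpt : K ∩ -K = {0}) (hQ : Q.IsHermitian) (hdet : Q.det ≠ 0) {v : Fin n → ℝ} {μ : ℝ}
    (hv : v ≠ 0) (hμ : 0 < μ) (heig : Q *ᵥ v = μ • v) {x : Fin n → ℝ} (hx : x ∈ interior K) :
    x ⬝ᵥ v ≠ 0 := by
  intro hxv
  obtain ⟨e, he⟩ := exists_dotProduct_mulVec_self_neg_of_posEigCount_eq_one hQ hdet hL.1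
  have hqv : 0 < v ⬝ᵥ Q *ᵥ v := by
    rw [heig, dotProduct_smul, smul_eq_mul]
    exact mul_pos hμ (dotProduct_star_self_pos_iff.2 hv)
  have hx0 : x = 0 := hQ.eq_zero_of_dotProduct_mulVec_eq_zero_of_nonneg he hqv
    (by rw [heig, dotProduct_smul, hxv, smul_zero]) (hL.2 x hx x hx).le
  have : Nontrivial (Fin n → ℝ) := nontrivial_of_ne v 0 hv
  exact zero_notMem_interior_of_inter_neg_eq hpt (hx0 ▸ hx)

theorem IsLorentzianMatrix.eigenvector_mem_interior (hL : IsLorentzianMatrix K Q)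
    (hK : IsProperCone K) (hsd : K = dualConeSet K) (hQ : Q.IsHermitian) (hdet : Q.det ≠ 0)
    {v : Fin n → ℝ} {μ : ℝ} (hv : v ≠ 0) (hμ : 0 < μ) (heig : Q *ᵥ v = μ • v)
    {x₀ : Fin n → ℝ} (hx₀ : x₀ ∈ interior K) (hpos : 0 < x₀ ⬝ᵥ v) : v ∈ interior K := by
  have ⟨hconv, _, _, hpt, hint⟩ := hK
  have hvint : ∀ y ∈ interior K, 0 < y ⬝ᵥ v :=
    fun y hy => hconv.interior.isPreconnected.pos_of_forall_ne_zero (by fun_prop)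
      (fun x hx => hL.dotProduct_eigenvector_ne_zero hpt hQ hdet hv hμ heig hx) hx₀ hpos hy
  have hvK : v ∈ K := by
    rw [hsd]
    intro x hx
    rw [dotProduct_comm]
    exact hconv.nonneg_of_mem_of_forall_interior_nonneg hint (f := (· ⬝ᵥ v)) (by fun_prop)
      (fun y hy => (hvint y hy).le) hx
  by_contra hvi
  exact hL.eigenvector_notMem_frontier hK hsd hQ hdet hv heig ⟨subset_closure hvK, hvi⟩

end Lorentzian

/-- Let `K ⊆ ℝⁿ` be a self-dual proper convex cone and `q(x) = xᵀQx` a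
`K`-Lorentzian quadratic form whose real symmetric matrix `Q` is nonsingular. Then no
eigenvector of `Q` lies on the boundary of `K`; in particular, an eigenvector of `Q` with
positive eigenvalue lies (after possibly replacing it by its negative) in the interior of `K`. -/
theorem stmt5 {n : ℕ} (K : Set (Fin n → ℝ)) (hK : IsProperCone K) (hsd : K = dualConeSet K)
    (Q : Matrix (Fin n) (Fin n) ℝ) (hsymm : Q.IsHermitian) (hns : Q.det ≠ 0)
    (hL : IsLorentzianMatrix K Q) :
    (∀ (v : Fin n → ℝ) (μ : ℝ), v ≠ 0 → Q *ᵥ v = μ • v → v ∉ frontier K) ∧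
    (∀ (v : Fin n → ℝ) (μ : ℝ), v ≠ 0 → 0 < μ → Q *ᵥ v = μ • v →
      v ∈ interior K ∨ -v ∈ interior K) := by
  refine ⟨fun v μ hv heig => hL.eigenvector_notMem_frontier hK hsd hsymm hns hv heig,
    fun v μ hv hμ heig => ?_⟩
  have ⟨_, _, _, hpt, x₀, hx₀⟩ := hK
  rcases (hL.dotProduct_eigenvector_ne_zero hpt hsymm hns hv hμ heig hx₀).lt_or_gt
    with hneg | hpos
  · refine .inr (hL.eigenvector_mem_interior hK hsd hsymm hns (neg_ne_zero.2 hv) hμ ?_ hx₀ ?_)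
    · rw [mulVec_neg, heig, smul_neg]
    · rwa [dotProduct_neg, neg_pos]
  · exact .inl (hL.eigenvector_mem_interior hK hsd hsymm hns hv hμ heig hx₀ hpos)
end

section
/- Let f be a real homogeneous polynomial of degree d ≥ 3 in n variables and let a ∈ ℝ^n be a point with f(a) > 0. Then f is log-concave at a if and only if the directional derivative D_a f is log-concave at a. -/
open Matrix

open MvPolynomial

/-- Directional derivative `D_a f = Σᵢ aᵢ ∂f/∂xᵢ` of a polynomial. -/
noncomputable def dirDeriv {n : ℕ} (a : Fin n → ℝ) (f : MvPolynomial (Fin n) ℝ) :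
    MvPolynomial (Fin n) ℝ :=
  ∑ i, a i • pderiv i f

/-- The gradient of a polynomial at a point. -/
noncomputable def polyGrad {n : ℕ} (f : MvPolynomial (Fin n) ℝ) (x : Fin n → ℝ) :
    Fin n → ℝ :=
  fun i => eval x (pderiv i f)

/-- The Hessian matrix of a polynomial at a point. -/
noncomputable def polyHess {n : ℕ} (f : MvPolynomial (Fin n) ℝ) (x : Fin n → ℝ) :
    Matrix (Fin n) (Fin n) ℝ :=
  Matrix.of fun i j => eval x (pderiv i (pderiv j f))

/-- The Hessian of `log f` at `x`, namely `(f(x)·H_f(x) − ∇f(x)∇f(x)ᵀ)/f(x)²`. -/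
noncomputable def logHess {n : ℕ} (f : MvPolynomial (Fin n) ℝ) (x : Fin n → ℝ) :
    Matrix (Fin n) (Fin n) ℝ :=
  ((eval x f) ^ 2)⁻¹ • ((eval x f) • polyHess f x -
    Matrix.vecMulVec (polyGrad f x) (polyGrad f x))

/-- `f` is log-concave at `x`: either `f = 0`, or `f(x) > 0` and the Hessian of `log f`
at `x` is negative semidefinite. -/
def LogConcaveAt {n : ℕ} (f : MvPolynomial (Fin n) ℝ) (x : Fin n → ℝ) : Prop :=
  f = 0 ∨ (0 < eval x f ∧ (-(logHess f x)).PosSemidef)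

/-- `f` is strictly log-concave at `x`: `f(x) > 0` and the Hessian of `log f` at `x` is
negative definite. -/
def StrictLogConcaveAt {n : ℕ} (f : MvPolynomial (Fin n) ℝ) (x : Fin n → ℝ) : Prop :=
  0 < eval x f ∧ (-(logHess f x)).PosDef

/-!
Euler's identity at `a` gives `D_a f(a) = d f(a)`, `∇(D_a f)(a) = (d-1) ∇f(a)`,
`H_{D_a f}(a) = (d-2) H_f(a)` and `H_f(a) a = (d-1) ∇f(a)`. With `g = ∇f(a)` and `Q = H_f(a)`,
log-concavity of `f`, resp. `D_a f`, at `a` reads `c vᵀQv ≤ e (g·v)²` for all `v`, where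
`(c, e) = (f(a), 1)`, resp. `(d(d-2) f(a), (d-1)²)`. Splitting `v = w + t a` with `g·w = 0`
turns `vᵀQv` into `wᵀQw + t² d(d-1) f(a)` and `g·v` into `t d f(a)`, so for `d ≥ 3` both
conditions say that `Q` is negative semidefinite on the hyperplane `g·w = 0`.
-/

namespace MvPolynomial

variable {σ R : Type*} [CommRing R]

theorem pderiv_pderiv_comm (i j : σ) (p : MvPolynomial σ R) :
    pderiv i (pderiv j p) = pderiv j (pderiv i p) := by
  classical
  have h : ⁅pderiv i, pderiv j⁆ = (0 : Derivation R (MvPolynomial σ R) (MvPolynomial σ R)) :=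
    derivation_ext fun k => by
      rw [Derivation.commutator_apply, pderiv_X, pderiv_X, Pi.single_apply, Pi.single_apply]
      split_ifs <;> simp
  have := congr($h p)
  rwa [Derivation.commutator_apply, Derivation.zero_apply, sub_eq_zero] at this

end MvPolynomial

section LinearAlgebra

variable {ι 𝕜 : Type*} [Fintype ι]

theorem Matrix.IsSymm.dotProduct_mulVec_comm [CommSemiring 𝕜] {Q : Matrix ι ι 𝕜} (hQ : Q.IsSymm)
    (u v : ι → 𝕜) :
    u ⬝ᵥ (Q *ᵥ v) = (Q *ᵥ u) ⬝ᵥ v := by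
  rw [dotProduct_mulVec, ← mulVec_transpose, hQ.eq]

theorem Matrix.IsSymm.forall_mul_le_mul_sq_iff [Field 𝕜] [LinearOrder 𝕜] [IsStrictOrderedRing 𝕜]
    {Q : Matrix ι ι 𝕜} (hQ : Q.IsSymm) {a g : ι → 𝕜} {α β c e : 𝕜}
    (hQa : Q *ᵥ a = α • g) (hga : g ⬝ᵥ a = β) (hβ : β ≠ 0)
    (hc : 0 < c) (hce : c * α * β ≤ e * β ^ 2) :
    (∀ v, c * (v ⬝ᵥ (Q *ᵥ v)) ≤ e * (g ⬝ᵥ v) ^ 2) ↔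
      ∀ w, g ⬝ᵥ w = 0 → w ⬝ᵥ (Q *ᵥ w) ≤ 0 := by
  refine ⟨fun h w hw => ?_, fun h v => ?_⟩
  · have := h w
    rw [hw] at this
    nlinarith
  set t := (g ⬝ᵥ v) / β
  set w := v - t • a
  have hgw : g ⬝ᵥ w = 0 := by
    simp only [w, t, dotProduct_sub, dotProduct_smul, hga, smul_eq_mul]
    field_simp
    ring
  have hwa : w ⬝ᵥ (Q *ᵥ a) = 0 := by
    rw [hQa, dotProduct_smul, dotProduct_comm, hgw, smul_zero]
  have hv : v = w + t • a := by simp [w]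
  have hquad : v ⬝ᵥ (Q *ᵥ v) = w ⬝ᵥ (Q *ᵥ w) + t ^ 2 * (α * β) := by
    rw [hv, mulVec_add, mulVec_smul, dotProduct_add, add_dotProduct, add_dotProduct,
      smul_dotProduct, hQ.dotProduct_mulVec_comm a w]
    simp only [hQa, dotProduct_smul, smul_dotProduct, dotProduct_comm a g, dotProduct_comm w g,
      hga, hgw, smul_eq_mul]
    ring
  have hgv : g ⬝ᵥ v = t * β := by simp only [t]; field_simp
  rw [hquad, hgv]
  nlinarith [h w hgw, mul_le_mul_of_nonneg_left hce (sq_nonneg t)]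

end LinearAlgebra

section Polynomial

variable {n d : ℕ}

theorem eval_dirDeriv (a x : Fin n → ℝ) (p : MvPolynomial (Fin n) ℝ) :
    eval x (dirDeriv a p) = polyGrad p x ⬝ᵥ a := by
  simp [dirDeriv, polyGrad, dotProduct, smul_eval, mul_comm]

theorem pderiv_dirDeriv (a : Fin n → ℝ) (i : Fin n) (p : MvPolynomial (Fin n) ℝ) :
    pderiv i (dirDeriv a p) = dirDeriv a (pderiv i p) := by
  simp only [dirDeriv, map_sum, Derivation.map_smul, pderiv_pderiv_comm i]

theorem MvPolynomial.IsHomogeneous.eval_dirDeriv_self {p : MvPolynomial (Fin n) ℝ}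
    (hp : p.IsHomogeneous d) (a : Fin n → ℝ) : eval a (dirDeriv a p) = d * eval a p := by
  simpa [dirDeriv, smul_eval, nsmul_eq_mul] using congr(eval a $(hp.sum_X_mul_pderiv))

theorem MvPolynomial.IsHomogeneous.polyGrad_dirDeriv_self {p : MvPolynomial (Fin n) ℝ}
    (hp : p.IsHomogeneous d) (a : Fin n → ℝ) :
    polyGrad (dirDeriv a p) a = ((d - 1 : ℕ) : ℝ) • polyGrad p a := by
  ext i
  simp only [polyGrad, pderiv_dirDeriv, hp.pderiv.eval_dirDeriv_self, Pi.smul_apply, smul_eq_mul]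

theorem MvPolynomial.IsHomogeneous.polyHess_dirDeriv_self {p : MvPolynomial (Fin n) ℝ}
    (hp : p.IsHomogeneous d) (a : Fin n → ℝ) :
    polyHess (dirDeriv a p) a = ((d - 2 : ℕ) : ℝ) • polyHess p a := by
  ext i j
  simp [polyHess, pderiv_dirDeriv, hp.pderiv.pderiv.eval_dirDeriv_self, Nat.sub_sub]

theorem MvPolynomial.IsHomogeneous.polyHess_mulVec_self {p : MvPolynomial (Fin n) ℝ}
    (hp : p.IsHomogeneous d) (a : Fin n → ℝ) :
    polyHess p a *ᵥ a = ((d - 1 : ℕ) : ℝ) • polyGrad p a := by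
  ext i
  rw [Pi.smul_apply, smul_eq_mul, polyGrad, ← hp.pderiv.eval_dirDeriv_self, eval_dirDeriv]
  simp only [mulVec, dotProduct, polyHess, polyGrad, of_apply, pderiv_pderiv_comm i]

theorem isSymm_polyHess (p : MvPolynomial (Fin n) ℝ) (x : Fin n → ℝ) : (polyHess p x).IsSymm :=
  IsSymm.ext fun i j => by simp only [polyHess, of_apply, pderiv_pderiv_comm i j]

end Polynomial

section LogConcavity

variable {n : ℕ}

theorem logConcaveAt_iff_of_eval_pos {p : MvPolynomial (Fin n) ℝ} {x : Fin n → ℝ}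
    (hx : 0 < eval x p) :
    LogConcaveAt p x ↔
      ∀ v, eval x p * (v ⬝ᵥ (polyHess p x *ᵥ v)) ≤ (polyGrad p x ⬝ᵥ v) ^ 2 := by
  have hp : p ≠ 0 := by rintro rfl; simp at hx
  have hsymm : (-(logHess p x)).IsHermitian := by
    refine isHermitian_iff_isSymm.2 (IsSymm.neg (IsSymm.smul (IsSymm.sub ?_ ?_) _))
    · exact (isSymm_polyHess p x).smul _
    · exact transpose_vecMulVec _ _
  have hquad : ∀ v, v ⬝ᵥ (-(logHess p x) *ᵥ v) =
      (eval x p ^ 2)⁻¹ * ((polyGrad p x ⬝ᵥ v) ^ 2 - eval x p * (v ⬝ᵥ (polyHess p x *ᵥ v))) := by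
    intro v
    simp only [logHess, neg_mulVec, smul_mulVec, sub_mulVec, vecMulVec_mulVec, dotProduct_neg,
      dotProduct_smul, dotProduct_sub, dotProduct_comm v (polyGrad p x), smul_eq_mul,
      MulOpposite.smul_eq_mul_unop, MulOpposite.unop_op]
    ring
  simp only [LogConcaveAt, hp, false_or, hx, true_and, posSemidef_iff_dotProduct_mulVec,
    star_trivial, hquad, hsymm]
  exact forall_congr' fun v => by rw [mul_nonneg_iff_of_pos_left (by positivity), sub_nonneg]

end LogConcavity

/-- Let `f` be a real homogeneous polynomial of degree `d ≥ 3` and `a` a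
point with `f(a) > 0`. Then `f` is log-concave at `a` if and only if `D_a f` is log-concave
at `a`. -/
theorem stmt11 {n d : ℕ} (hd : 3 ≤ d) (f : MvPolynomial (Fin n) ℝ)
    (hf : f.IsHomogeneous d) (a : Fin n → ℝ) (ha : 0 < eval a f) :
    LogConcaveAt f a ↔ LogConcaveAt (dirDeriv a f) a := by
  have hd1 : ((d - 1 : ℕ) : ℝ) = d - 1 := by rw [Nat.cast_sub (by omega), Nat.cast_one]
  have hd2 : ((d - 2 : ℕ) : ℝ) = d - 2 := by rw [Nat.cast_sub (by omega), Nat.cast_two]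
  have hdR : (3 : ℝ) ≤ d := by exact_mod_cast hd
  have hDa : 0 < eval a (dirDeriv a f) := by rw [hf.eval_dirDeriv_self]; positivity
  have hga : polyGrad f a ⬝ᵥ a = d * eval a f := by rw [← eval_dirDeriv, hf.eval_dirDeriv_self]
  have hβ : (d : ℝ) * eval a f ≠ 0 := by positivity
  have key (c e : ℝ) := (isSymm_polyHess f a).forall_mul_le_mul_sq_iff (c := c) (e := e)
    (hf.polyHess_mulVec_self a) hga hβ
  rw [logConcaveAt_iff_of_eval_pos ha, logConcaveAt_iff_of_eval_pos hDa, hf.eval_dirDeriv_self,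
    hf.polyGrad_dirDeriv_self, hf.polyHess_dirDeriv_self]
  simp only [smul_mulVec, dotProduct_smul, smul_dotProduct, smul_eq_mul, mul_pow, ← mul_assoc]
  calc _ ↔ ∀ w, polyGrad f a ⬝ᵥ w = 0 → w ⬝ᵥ (polyHess f a *ᵥ w) ≤ 0 := by
        simpa only [one_mul] using key _ 1 ha (by rw [hd1]; nlinarith)
    _ ↔ _ := (key _ _ (by rw [hd2]; exact mul_pos (by positivity) (by linarith))
        (by rw [hd1, hd2]; nlinarith)).symm
end
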